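/- arXiv:2507.15341 — 5 statements merged into one kernel-verified Lean document; each statement's English description precedes it below -/
import Mathlib

section
/- Every Kan complex is a Skvortsov–Shehtman complex; that is, if a simplicial set S satisfies the Kan condition Kan_p[n] for all n>0 and 0 ≤ p ≤ n, then S satisfies the Beck–Chevalley condition BC_{p,q}[n] for all n>1 and 0 ≤ p < q ≤ n. -/
open CategoryTheory Simplicial

/-- The Kan condition `Kan_p[1]` in dimension 1. -/
def KanCondition1 (S : SSet) (p : Fin 2) : Prop :=
  ∀ c : (i : Fin 2) → i ≠ p → S _⦋0⦌,
    ∃ x : S _⦋1⦌, ∀ (i : Fin 2) (hi : i ≠ p), S.δ i x = c i hi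

/-- The Kan condition `Kan_p[k+2]` in dimensions `≥ 2`. -/
def KanCondition (S : SSet) (k : ℕ) (p : Fin (k + 3)) : Prop :=
  ∀ c : (i : Fin (k + 3)) → i ≠ p → S _⦋k + 1⦌,
    (∀ (i j : Fin (k + 3)) (hij : i < j) (hi : i ≠ p) (hj : j ≠ p),
      S.δ (⟨i.1, by have h1 : i.1 < j.1 := hij; have h2 := j.isLt; omega⟩ : Fin (k + 2)) (c j hj) =
      S.δ (⟨j.1 - 1, by have h2 := j.isLt; omega⟩ : Fin (k + 2)) (c i hi)) →
    ∃ x : S _⦋k + 2⦌, ∀ (i : Fin (k + 3)) (hi : i ≠ p), S.δ i x = c i hi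

/-- The Beck–Chevalley condition `BC_{p,q}[k+2]`. -/
def BCCondition (S : SSet) (k : ℕ) (p q : Fin (k + 3)) (hpq : p < q) : Prop :=
  ∀ cp cq : S _⦋k + 1⦌,
    S.δ (⟨p.1, by have h1 : p.1 < q.1 := hpq; have h2 := q.isLt; omega⟩ : Fin (k + 2)) cq =
    S.δ (⟨q.1 - 1, by have h2 := q.isLt; omega⟩ : Fin (k + 2)) cp →
    ∃ x : S _⦋k + 2⦌, S.δ p x = cp ∧ S.δ q x = cq

/-!
A Kan complex fills not only horns but every compatible family of faces `c i`, `i ∈ A`, of an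
`(n + 2)`-simplex with `A` a proper subset of the faces. The proof is by induction on `n` and
downward induction on `A`. If a single face is missing, this is the Kan condition. If two faces
`r ≠ s` are missing, the simplicial identities prescribe the faces of the missing `r`-th face in
terms of the `c i`; these form a compatible family one dimension lower, still proper because of
`s`, so it has a filler `y`, and `A` grows by `r` with `c r := y`. In dimension one the Kan
condition provides `y` directly. The Beck–Chevalley condition `BC_{p,q}` is the case
`A = {p, q}`.
-/

open Finset Function

theorem Fin.val_succAbove_eq_ite {m : ℕ} (r : Fin (m + 1)) (b : Fin m) :
    (r.succAbove b).1 = if b.1 < r.1 then b.1 else b.1 + 1 := by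
  unfold Fin.succAbove
  split_ifs <;> simp_all [Fin.lt_def]

theorem Fin.val_predAbove_eq_ite {m : ℕ} (b : Fin m) (r : Fin (m + 1)) :
    (b.predAbove r).1 = if b.1 < r.1 then r.1 - 1 else r.1 := by
  unfold Fin.predAbove
  split_ifs with h₁ h₂ h₂ <;> rw [Fin.lt_def, Fin.val_castSucc] at h₁ <;> simp <;> omega

namespace SSet

variable {S : SSet}

theorem δ_δ_eq_δ_predAbove_δ_succAbove {n : ℕ} (x : S _⦋n + 2⦌) (b : Fin (n + 2))
    (r : Fin (n + 3)) :
    S.δ b (S.δ r x) = S.δ (b.predAbove r) (S.δ (r.succAbove b) x) := by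
  rcases lt_or_ge b.castSucc r with h | h
  · rw [Fin.succAbove_of_castSucc_lt _ _ h, Fin.predAbove_of_castSucc_lt _ _ h]
    exact ConcreteCategory.congr_hom (S.δ_comp_δ' h) x
  · rw [Fin.succAbove_of_le_castSucc _ _ h, Fin.predAbove_of_le_castSucc _ _ h]
    exact (ConcreteCategory.congr_hom (S.δ_comp_δ'' h) x).symm

variable (S) in
def FacesCompatible {n : ℕ} (A : Finset (Fin (n + 3))) (c : Fin (n + 3) → S _⦋n + 1⦌) : Prop :=
  ∀ (i j : Fin (n + 3)) (hij : i < j), i ∈ A → j ∈ A →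
    S.δ (⟨i.1, by have h1 : i.1 < j.1 := hij; have h2 := j.isLt; omega⟩ : Fin (n + 2)) (c j) =
    S.δ (⟨j.1 - 1, by have h2 := j.isLt; omega⟩ : Fin (n + 2)) (c i)

variable (S) in
/-- By `δ_δ_eq_δ_predAbove_δ_succAbove`, these are the faces `δ r x` has whenever `δ i x = c i`
for `i ∈ A`. -/
def FitsAsFace {n : ℕ} (A : Finset (Fin (n + 3))) (c : Fin (n + 3) → S _⦋n + 1⦌)
    (r : Fin (n + 3)) (y : S _⦋n + 1⦌) : Prop :=
  ∀ b : Fin (n + 2), r.succAbove b ∈ A → S.δ b y = S.δ (b.predAbove r) (c (r.succAbove b))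

variable (S) in
def FillsCompatibleFaces (n : ℕ) : Prop :=
  ∀ (A : Finset (Fin (n + 3))) (c : Fin (n + 3) → S _⦋n + 1⦌), A ≠ univ →
    S.FacesCompatible A c → ∃ x : S _⦋n + 2⦌, ∀ i ∈ A, S.δ i x = c i

theorem FacesCompatible.insert_update {n : ℕ} {A : Finset (Fin (n + 3))}
    {c : Fin (n + 3) → S _⦋n + 1⦌} {r : Fin (n + 3)} {y : S _⦋n + 1⦌}
    (hc : S.FacesCompatible A c) (hy : S.FitsAsFace A c r y) :
    S.FacesCompatible (insert r A) (update c r y) := by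
  intro i j hij hi hj
  rcases eq_or_ne i r with rfl | hir
  · obtain ⟨b, rfl⟩ := Fin.exists_succAbove_eq hij.ne'
    have hval : i.1 < (i.succAbove b).1 := hij
    rw [update_self, update_of_ne hij.ne']
    convert (hy b ((mem_insert.mp hj).resolve_left hij.ne')).symm using 4 <;>
      simp only [Fin.val_succAbove_eq_ite, Fin.val_predAbove_eq_ite] at hval ⊢ <;>
      split_ifs at hval ⊢ <;> omega
  rcases eq_or_ne j r with rfl | hjr
  · obtain ⟨b, rfl⟩ := Fin.exists_succAbove_eq hij.ne
    have hval : (j.succAbove b).1 < j.1 := hij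
    rw [update_self, update_of_ne hij.ne]
    convert hy b ((mem_insert.mp hi).resolve_left hij.ne) using 4 <;>
      simp only [Fin.val_succAbove_eq_ite, Fin.val_predAbove_eq_ite] at hval ⊢ <;>
      split_ifs at hval ⊢ <;> omega
  rw [update_of_ne hir, update_of_ne hjr]
  exact hc i j hij ((mem_insert.mp hi).resolve_left hir) ((mem_insert.mp hj).resolve_left hjr)

theorem FacesCompatible.predAbove_succAbove {n : ℕ} {A : Finset (Fin (n + 4))}
    {c : Fin (n + 4) → S _⦋n + 2⦌} (hc : S.FacesCompatible A c) (r : Fin (n + 4)) :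
    S.FacesCompatible {b | r.succAbove b ∈ A} fun b ↦ S.δ (b.predAbove r) (c (r.succAbove b)) := by
  intro b b' hbb' hb hb'
  have hlt : b.1 < b'.1 := hbb'
  simp only [mem_filter, mem_univ, true_and] at hb hb'
  have key := congrArg (S.δ ((⟨b.1, by omega⟩ : Fin (n + 2)).predAbove (b'.predAbove r)))
    (hc _ _ (Fin.strictMono_succAbove r hbb') hb hb')
  rw [δ_δ_eq_δ_predAbove_δ_succAbove (c (r.succAbove b')),
    δ_δ_eq_δ_predAbove_δ_succAbove (c (r.succAbove b))]
  convert key using 4 <;>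
    simp only [Fin.ext_iff, Fin.val_succAbove_eq_ite, Fin.val_predAbove_eq_ite] <;>
    split_ifs <;> omega

theorem exists_fitsAsFace_of_kanCondition1 (hkan : ∀ p, KanCondition1 S p) {A : Finset (Fin 3)}
    (c : Fin 3 → S _⦋1⦌) {r s : Fin 3} (hsA : s ∉ A) (hsr : s ≠ r) :
    ∃ y, S.FitsAsFace A c r y := by
  obtain ⟨p, rfl⟩ := Fin.exists_succAbove_eq hsr
  obtain ⟨y, hy⟩ := hkan p fun b _ ↦ S.δ (b.predAbove r) (c (r.succAbove b))
  exact ⟨y, fun b hb ↦ hy b (by rintro rfl; exact hsA hb)⟩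

theorem FillsCompatibleFaces.exists_fitsAsFace {n : ℕ} (hfill : S.FillsCompatibleFaces n)
    {A : Finset (Fin (n + 4))} {c : Fin (n + 4) → S _⦋n + 2⦌} (hc : S.FacesCompatible A c)
    {r s : Fin (n + 4)} (hsA : s ∉ A) (hsr : s ≠ r) : ∃ y, S.FitsAsFace A c r y := by
  obtain ⟨p, rfl⟩ := Fin.exists_succAbove_eq hsr
  have hB : ({b | r.succAbove b ∈ A} : Finset _) ≠ univ := fun h ↦
    hsA (by simpa using h.ge (mem_univ p))
  obtain ⟨y, hy⟩ := hfill _ _ hB (hc.predAbove_succAbove r)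
  exact ⟨y, fun b hb ↦ hy b (by simpa using hb)⟩

theorem fillsCompatibleFaces_of_kanCondition {n : ℕ} (hkan : ∀ p, KanCondition S n p)
    (hfit : ∀ (A : Finset (Fin (n + 3))) (c : Fin (n + 3) → S _⦋n + 1⦌) (r s : Fin (n + 3)),
      S.FacesCompatible A c → s ∉ A → s ≠ r → ∃ y, S.FitsAsFace A c r y) :
    S.FillsCompatibleFaces n := by
  intro A
  refine strongDownwardInductionOn (n := n + 3) A (fun A ih _ c hA hc ↦ ?_)
    (by simpa using card_le_univ A)
  obtain ⟨r, hr⟩ : ∃ r, r ∉ A := by simpa [eq_univ_iff_forall] using hA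
  by_cases hs : ∃ s ∉ A, s ≠ r
  · obtain ⟨s, hsA, hsr⟩ := hs
    obtain ⟨y, hy⟩ := hfit A c r s hc hsA hsr
    obtain ⟨x, hx⟩ := ih (by simpa using card_le_univ (insert r A)) (ssubset_insert hr)
      (update c r y) (fun h ↦ hsA (mem_of_mem_insert_of_ne (h ▸ mem_univ s) hsr))
      (hc.insert_update hy)
    refine ⟨x, fun i hi ↦ ?_⟩
    rw [hx i (mem_insert_of_mem hi), update_of_ne (ne_of_mem_of_not_mem hi hr)]
  · push Not at hs
    have hA' : ∀ i, i ≠ r → i ∈ A := fun i hi ↦ by_contra fun h ↦ hi (hs i h)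
    obtain ⟨x, hx⟩ := hkan r (fun i _ ↦ c i) fun i j hij hi hj ↦ hc i j hij (hA' i hi) (hA' j hj)
    exact ⟨x, fun i hi ↦ hx i (ne_of_mem_of_not_mem hi hr)⟩

theorem fillsCompatibleFaces_of_kan (h1 : ∀ p, KanCondition1 S p)
    (h2 : ∀ k p, KanCondition S k p) (n : ℕ) : S.FillsCompatibleFaces n := by
  induction n with
  | zero =>
    exact fillsCompatibleFaces_of_kanCondition (h2 0) fun _ c _ _ _ hsA hsr ↦
      exists_fitsAsFace_of_kanCondition1 h1 c hsA hsr
  | succ n ih =>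
    exact fillsCompatibleFaces_of_kanCondition (h2 (n + 1)) fun _ _ _ _ hc hsA hsr ↦
      ih.exists_fitsAsFace hc hsA hsr

theorem FillsCompatibleFaces.bcCondition {k : ℕ} (hfill : S.FillsCompatibleFaces k)
    {p q : Fin (k + 3)} (hpq : p < q) : BCCondition S k p q hpq := by
  intro cp cq hglue
  have hA : ({p, q} : Finset (Fin (k + 3))) ≠ univ := fun h ↦ by
    have := card_le_two (a := p) (b := q)
    rw [h, card_univ, Fintype.card_fin] at this
    omega
  have hc : S.FacesCompatible {p, q} (update (fun _ ↦ cq) p cp) := by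
    intro i j hij hi hj
    simp only [mem_insert, mem_singleton] at hi hj
    rcases hi with rfl | rfl <;> rcases hj with rfl | rfl
    · exact absurd hij (lt_irrefl _)
    · simpa [update_of_ne hpq.ne'] using hglue
    · exact absurd (hij.trans hpq) (lt_irrefl _)
    · exact absurd hij (lt_irrefl _)
  obtain ⟨x, hx⟩ := hfill _ _ hA hc
  exact ⟨x, by simpa using hx p (by simp), by simpa [hpq.ne'] using hx q (by simp)⟩

end SSet

/-- Every Kan complex is a Skvortsov-Shehtman complex: if a simplicial set `S` satisfies the
Kan condition `Kan_p[n]` for all `n > 0` and `0 <= p <= n`, then `S` satisfies the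
Beck-Chevalley condition `BC_{p,q}[n]` for all `n > 1` and `0 <= p < q <= n`. -/
theorem kanComplex_isSSComplex (S : SSet)
    (h1 : ∀ p : Fin 2, KanCondition1 S p)
    (h2 : ∀ (k : ℕ) (p : Fin (k + 3)), KanCondition S k p) :
    ∀ (k : ℕ) (p q : Fin (k + 3)) (hpq : p < q), BCCondition S k p q hpq := by
  intro k p q hpq
  exact (SSet.fillsCompatibleFaces_of_kan h1 h2 k).bcCondition hpq
end

section
/- Every Kan fibration of simplicial sets is a Skvortsov–Shehtman fibration: if f : E → B is a Kan fibration, then for all n>1 and 0 ≤ p < q ≤ n, every commutative square with left vertical map the inclusion of the rhombus Λ_{p,q}[n] into Δ[n] and right vertical map f admits a diagonal filler Δ[n] → E making both triangles commute. -/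
open CategoryTheory Simplicial

namespace SSet

/-- The `p,q`-th rhombus `Λ_{p,q}[n] ⊆ Δ[n]`: the union of the `p`-th and the `q`-th face of the
standard `n`-simplex. A simplex of `Δ[n]` belongs to it iff its image misses `p` or misses `q`. -/
def rhombus (n : ℕ) (p q : Fin (n + 1)) : SSet where
  obj m := { α : Δ[n].obj m //
    p ∉ Set.range (stdSimplex.asOrderHom α) ∨ q ∉ Set.range (stdSimplex.asOrderHom α) }
  map {m₁ m₂} f := TypeCat.ofHom fun α =>
    ⟨Δ[n].map f α.1, by
      rcases α.property with h | h
      · exact Or.inl (fun hc => h (Set.range_comp_subset_range _ _ hc))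
      · exact Or.inr (fun hc => h (Set.range_comp_subset_range _ _ hc))⟩

/-- The inclusion of the rhombus `Λ_{p,q}[n]` into the standard simplex `Δ[n]`. -/
def rhombusInclusion (n : ℕ) (p q : Fin (n + 1)) : rhombus n p q ⟶ Δ[n] where
  app m := TypeCat.ofHom fun (α : { α : Δ[n].obj m // _ }) => α

end SSet


open CategoryTheory Simplicial

/-- A map of simplicial sets is a Kan fibration if it has the right lifting property with
respect to all horn inclusions. -/
def IsKanFibration {E B : SSet} (f : E ⟶ B) : Prop :=
  ∀ (n : ℕ) (i : Fin (n + 2)), HasLiftingProperty (SSet.horn (n + 1) i).ι f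

/-!
The rhombus is a union of codimension-one faces of `Δ[n]`, and the inclusion of any union of
faces indexed by a nonempty proper subset `S` of the vertices is an anodyne extension. By
induction on the number of missing faces: for `j ∉ S`, the face `d_j ≅ Δ[n - 1]` meets the
union of the faces in `S` in a union of faces of `Δ[n - 1]` with one missing face fewer, so
adjoining `d_j` is a cobase change of an anodyne extension; when only one face is missing we
have a horn. Kan fibrations lift against anodyne extensions.
-/

universe u

open MorphismProperty

lemma Fin.card_compl_filter_succAbove_mem_add_one {n : ℕ} (S : Finset (Fin (n + 2)))
    {j : Fin (n + 2)} (hj : j ∉ S) :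
    ({a | j.succAbove a ∈ S} : Finset _)ᶜ.card + 1 = Sᶜ.card := by
  have hcompl :
      Sᶜ = insert j (({a | j.succAbove a ∈ S} : Finset _)ᶜ.map (Fin.succAboveEmb j)) := by
    ext i
    by_cases hij : i = j
    · subst hij
      simpa using hj
    · obtain ⟨a, rfl⟩ := Fin.exists_succAbove_eq hij
      simp [hij]
  rw [hcompl, Finset.card_insert_of_notMem (by simp [Fin.succAbove_ne]), Finset.card_map]

namespace SSet

namespace stdSimplex

def unionFaces {n : ℕ} (S : Finset (Fin (n + 1))) : (Δ[n] : SSet.{u}).Subcomplex where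
  obj _ := {x | ∃ i ∈ S, i ∉ Set.range (asOrderHom x)}
  map _ _ := fun ⟨i, hi, hx⟩ => ⟨i, hi, fun h => hx (Set.range_comp_subset_range _ _ h)⟩

lemma mem_unionFaces_iff {n : ℕ} (S : Finset (Fin (n + 1))) {m : SimplexCategoryᵒᵖ}
    (x : Δ[n].obj m) :
    x ∈ (unionFaces.{u} S).obj m ↔ ∃ i ∈ S, i ∉ Set.range (asOrderHom x) := Iff.rfl

lemma unionFaces_compl_singleton {n : ℕ} (i : Fin (n + 1)) :
    unionFaces.{u} {i}ᶜ = horn n i := by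
  ext m x
  simp [mem_unionFaces_iff, mem_horn_iff, Set.eq_univ_iff_forall]

lemma unionFaces_insert {n : ℕ} (S : Finset (Fin (n + 1))) (j : Fin (n + 1)) :
    unionFaces.{u} (insert j S) = unionFaces S ⊔ face {j}ᶜ := by
  ext ⟨⟨m⟩⟩ x
  simp [mem_unionFaces_iff, or_comm]
  rfl

lemma preimage_unionFaces_δ {n : ℕ} (S : Finset (Fin (n + 2))) {j : Fin (n + 2)} (hj : j ∉ S) :
    (unionFaces.{u} S).preimage (stdSimplex.δ j) = unionFaces {a | j.succAbove a ∈ S} := by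
  ext m x
  have hδ : ∀ k, asOrderHom ((stdSimplex.δ j).app m x) k = j.succAbove (asOrderHom x k) :=
    fun _ => rfl
  simp only [Subcomplex.preimage_obj, Set.mem_preimage, mem_unionFaces_iff, Set.mem_range,
    not_exists, hδ, Finset.mem_filter, Finset.mem_univ, true_and]
  constructor
  · rintro ⟨i, hi, hx⟩
    obtain ⟨a, rfl⟩ := Fin.exists_succAbove_eq (ne_of_mem_of_not_mem hi hj)
    exact ⟨a, hi, fun k hk => hx k (congrArg j.succAbove hk)⟩
  · rintro ⟨a, ha, hx⟩
    exact ⟨j.succAbove a, ha, fun k hk => hx k (Fin.succAbove_right_injective hk)⟩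

end stdSimplex

lemma Subcomplex.image_preimage_eq_inf_range {X Y : SSet.{u}} (A : X.Subcomplex) (g : Y ⟶ X) :
    (A.preimage g).image g = A ⊓ range g := by
  aesop

lemma anodyneExtensions_of_range_eq {X Y : SSet.{u}} (f : X ⟶ Y) [Mono f] (A : Y.Subcomplex)
    (hA : Subcomplex.range f = A) (h : anodyneExtensions A.ι) : anodyneExtensions f := by
  subst hA
  rw [← Subcomplex.toRange_ι f]
  exact comp_mem _ _ _ (.of_isIso _) h

lemma anodyneExtensions_homOfLE_inf_of_range_eq {X Y : SSet.{u}} (A B : X.Subcomplex)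
    (g : Y ⟶ X) [Mono g] (hg : Subcomplex.range g = B) (h : anodyneExtensions (A.preimage g).ι) :
    anodyneExtensions (Subcomplex.homOfLE (inf_le_right : A ⊓ B ≤ B)) := by
  subst hg
  have : Mono ((A.preimage g).toImage g) := mono_of_mono_fac ((A.preimage g).toImage_ι g)
  have : IsIso ((A.preimage g).toImage g) := isIso_of_mono_of_epi _
  have himage := (anodyneExtensions.arrow_mk_iso_iff
    (Arrow.isoMk' (A.preimage g).ι (Subcomplex.homOfLE ((A.preimage g).image_le_range g))
      (asIso ((A.preimage g).toImage g)) (asIso (Subcomplex.toRange g)) rfl)).mp h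
  exact comp_mem _ _ _
    (.of_isIso (Subcomplex.eqToIso (A.image_preimage_eq_inf_range g).symm).hom) himage

lemma anodyneExtensions_homOfLE_le_sup {X : SSet.{u}} (A B : X.Subcomplex)
    (h : anodyneExtensions (Subcomplex.homOfLE (inf_le_right : A ⊓ B ≤ B))) :
    anodyneExtensions (Subcomplex.homOfLE (le_sup_left : A ≤ A ⊔ B)) :=
  anodyneExtensions.of_isPushout (Subcomplex.BicartSq.isPushout ⟨rfl, rfl⟩) h

theorem anodyneExtensions_unionFaces_ι {n : ℕ} (S : Finset (Fin (n + 1))) (hS : S.Nonempty)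
    (hSc : Sᶜ.Nonempty) : anodyneExtensions (stdSimplex.unionFaces.{u} S).ι := by
  obtain ⟨k, hk⟩ : ∃ k, Sᶜ.card = k + 1 :=
    Nat.exists_eq_add_one.mpr (Finset.card_pos.mpr hSc)
  clear hSc
  induction k generalizing n S with
  | zero =>
    obtain ⟨i, hi⟩ := Finset.card_eq_one.mp hk
    rw [← compl_compl S, hi, stdSimplex.unionFaces_compl_singleton]
    have hcard := S.card_add_card_compl
    rw [Fintype.card_fin, hk] at hcard
    have : NeZero n := ⟨by have := hS.card_pos; omega⟩
    exact anodyneExtensions.horn_ι i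
  | succ k ih =>
    obtain ⟨j, hj⟩ : Sᶜ.Nonempty := Finset.card_pos.mp (by omega)
    rw [Finset.mem_compl] at hj
    obtain _ | n := n
    · have hcard := S.card_add_card_compl
      rw [Fintype.card_fin, hk] at hcard
      omega
    have hinsert := ih (insert j S) (Finset.insert_nonempty j S) (by
      rw [Finset.compl_insert, Finset.card_erase_of_mem (Finset.mem_compl.mpr hj), hk]
      rfl)
    have hface := ih {a | j.succAbove a ∈ S} (by
      obtain ⟨i, hi⟩ := hS
      obtain ⟨a, rfl⟩ := Fin.exists_succAbove_eq (ne_of_mem_of_not_mem hi hj)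
      exact ⟨a, by simpa using hi⟩)
      (by have := Fin.card_compl_filter_succAbove_mem_add_one S hj; omega)
    rw [← stdSimplex.preimage_unionFaces_δ S hj] at hface
    rw [stdSimplex.unionFaces_insert] at hinsert
    have hadjoin := anodyneExtensions_homOfLE_le_sup _ _
      (anodyneExtensions_homOfLE_inf_of_range_eq _ _ _ (stdSimplex.range_δ j) hface)
    exact comp_mem _ _ _ hadjoin hinsert

instance {n : ℕ} (p q : Fin (n + 1)) : Mono (rhombusInclusion.{u} n p q) := by
  rw [NatTrans.mono_iff_mono_app]
  intro m
  rw [mono_iff_injective]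
  exact Subtype.val_injective

lemma range_rhombusInclusion {n : ℕ} (p q : Fin (n + 1)) :
    Subcomplex.range (rhombusInclusion.{u} n p q) = stdSimplex.unionFaces {p, q} := by
  ext m x
  simp only [stdSimplex.mem_unionFaces_iff, Finset.mem_insert, Finset.mem_singleton,
    exists_eq_or_imp, exists_eq_left]
  exact ⟨fun ⟨y, hy⟩ => hy ▸ y.2, fun hx => ⟨⟨x, hx⟩, rfl⟩⟩

lemma anodyneExtensions_rhombusInclusion (n : ℕ) (p q : Fin (n + 3)) :
    anodyneExtensions (rhombusInclusion.{u} (n + 2) p q) := by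
  refine anodyneExtensions_of_range_eq _ _ (range_rhombusInclusion p q)
    (anodyneExtensions_unionFaces_ι _ (Finset.insert_nonempty p {q}) ?_)
  rw [← Finset.card_pos, Finset.card_compl, Fintype.card_fin]
  have := Finset.card_le_two (a := p) (b := q)
  omega

end SSet

open SSet.modelCategoryQuillen in
lemma IsKanFibration.hasLiftingProperty {E B : SSet.{u}} {f : E ⟶ B} (hf : IsKanFibration f)
    {X Y : SSet.{u}} {i : X ⟶ Y} (hi : SSet.anodyneExtensions i) : HasLiftingProperty i f := by
  refine hi f fun _ _ j hj => ?_
  simp only [J, iSup_iff] at hj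
  obtain ⟨n, ⟨i⟩⟩ := hj
  exact hf n i

theorem isKanFibration_hasLiftingProperty_rhombus_general {E B : SSet} (f : E ⟶ B)
    (hf : IsKanFibration f) (n : ℕ) (p q : Fin (n + 3)) :
    HasLiftingProperty (SSet.rhombusInclusion (n + 2) p q) f :=
  hf.hasLiftingProperty (SSet.anodyneExtensions_rhombusInclusion n p q)

/-- Every Kan fibration is a Skvortsov-Shehtman fibration: it has the right lifting property
with respect to all rhombus inclusions `Λ_{p,q}[n] ↪ Δ[n]`, `n > 1`, `0 ≤ p < q ≤ n`. -/
theorem isKanFibration_hasLiftingProperty_rhombus {E B : SSet} (f : E ⟶ B)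
    (hf : IsKanFibration f) (n : ℕ) (p q : Fin (n + 3)) (hpq : p < q) :
    HasLiftingProperty (SSet.rhombusInclusion (n + 2) p q) f :=
  isKanFibration_hasLiftingProperty_rhombus_general f hf n p q
end

section
/- For any simplicial set S, the conjunction of the Kan conditions Kan_p[n] over all n ≤ 2 (i.e., Kan_0[1], Kan_1[1], Kan_0[2], Kan_1[2], Kan_2[2]) is equivalent to the conjunction of the Beck–Chevalley conditions BC_{p,q}[n] over all n ≤ 2 (i.e., BC_{0,1}[2], BC_{0,2}[2], BC_{1,2}[2]). -/
open CategoryTheory Simplicial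

/-!
A 1-dimensional horn is a single vertex, filled by its degenerate edge. A 2-dimensional horn
`Λ²_r` consists of the two edges `c_p, c_q` (`{p, q, r} = {0, 1, 2}`, `p < q`) subject to the single
compatibility condition `d_p c_q = d_{q-1} c_p`, so filling it is exactly `BC_{p,q}[2]`.
-/

lemma kanCondition1 (S : SSet) (p : Fin 2) : KanCondition1 S p := by
  intro c
  fin_cases p
  · refine ⟨S.σ 0 (c 1 (by decide)), fun i hi => ?_⟩
    fin_cases i
    · exact absurd rfl hi
    · exact S.δ_comp_σ_succ_apply 0 _
  · refine ⟨S.σ 0 (c 0 (by decide)), fun i hi => ?_⟩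
    fin_cases i
    · exact S.δ_comp_σ_self_apply 0 _
    · exact absurd rfl hi

lemma Fin.eq_and_eq_of_lt_of_ne_three {p q r i j : Fin 3} (hpq : p < q) (hp : p ≠ r) (hq : q ≠ r)
    (hij : i < j) (hi : i ≠ r) (hj : j ≠ r) : i = p ∧ j = q := by
  simp only [Fin.ext_iff, Fin.lt_def, ne_eq] at *
  omega

lemma kanCondition_zero_iff_bcCondition (S : SSet) {p q r : Fin 3} (hpq : p < q)
    (hp : p ≠ r) (hq : q ≠ r) : KanCondition S 0 r ↔ BCCondition S 0 p q hpq := by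
  constructor
  · intro hkan cp cq hc
    obtain ⟨x, hx⟩ := hkan (fun i _ => if i = p then cp else cq) fun i j hij hi hj => by
      obtain ⟨rfl, rfl⟩ := Fin.eq_and_eq_of_lt_of_ne_three hpq hp hq hij hi hj
      simpa [hpq.ne'] using hc
    exact ⟨x, by simpa using hx p hp, by simpa [hpq.ne'] using hx q hq⟩
  · intro hbc c hc
    obtain ⟨x, hxp, hxq⟩ := hbc (c p hp) (c q hq) (hc p q hpq hp hq)
    refine ⟨x, fun i hi => ?_⟩
    obtain rfl | rfl : i = p ∨ i = q := by
      simp only [Fin.ext_iff, Fin.lt_def, ne_eq] at *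
      omega
    exacts [hxp, hxq]

/-- For any simplicial set `S`, the conjunction of the Kan conditions in dimensions `n ≤ 2`
(namely `Kan_0[1]`, `Kan_1[1]`, `Kan_0[2]`, `Kan_1[2]`, `Kan_2[2]`) is equivalent to the
conjunction of the Beck-Chevalley conditions in dimensions `n ≤ 2`
(namely `BC_{0,1}[2]`, `BC_{0,2}[2]`, `BC_{1,2}[2]`). -/
theorem kanConditions_le_two_iff_bcConditions_le_two (S : SSet) :
    ((∀ p : Fin 2, KanCondition1 S p) ∧ (∀ p : Fin 3, KanCondition S 0 p)) ↔
      (∀ (p q : Fin 3) (hpq : p < q), BCCondition S 0 p q hpq) := by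
  constructor
  · rintro ⟨-, hkan⟩ p q hpq
    obtain ⟨r, hp, hq⟩ : ∃ r, p ≠ r ∧ q ≠ r := by revert p q; decide
    exact (kanCondition_zero_iff_bcCondition S hpq hp hq).1 (hkan r)
  · intro hbc
    refine ⟨kanCondition1 S, fun r => ?_⟩
    obtain ⟨p, q, hpq, hp, hq⟩ : ∃ p q, p < q ∧ p ≠ r ∧ q ≠ r := by revert r; decide
    exact (kanCondition_zero_iff_bcCondition S hpq hp hq).2 (hbc p q hpq)
end

section
/- Let M be a commutative monoid and let n>1 and 0 ≤ p < q ≤ n. The simplicial set K(M,2) satisfies the Beck–Chevalley condition BC_{p,q}[n] if and only if: for any family of elements a_{ijk} ∈ M indexed by 0 ≤ i < j < k ≤ n with {p,q} ⊄ {i,j,k}, satisfying a_{ikl}·a_{ijk} = a_{ijl}·a_{jkl} for all 0 ≤ i < j < k < l ≤ n with {p,q} ⊄ {i,j,k,l}, there exist elements x_{ipq} (0 ≤ i < p), y_{pjq} (p < j < q), z_{pqk} (q < k ≤ n) of M satisfying: (1) x_{ipq}·a_{ijp} = a_{ijq}·x_{jpq} for all 0 ≤ i < j < p; (2) y_{pkq}·a_{pjk}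 = y_{pjq}·a_{jkq} for all p < j < k < q; (3) a_{pkl}·z_{pqk} = z_{pql}·a_{qkl} for all q < k < l ≤ n; (4) x_{ipq}·y_{pjq} = a_{ijq}·a_{ipj} for all 0 ≤ i < p < j < q; (5) a_{iqk}·x_{ipq} = a_{ipk}·z_{pqk} for all 0 ≤ i < p < q < k ≤ n; (6) z_{pqk}·y_{pjq} = a_{pjk}·a_{jqk} for all p < j < q < k ≤ n. -/
open CategoryTheory Simplicial

open CategoryTheory Simplicial

/-- The 2-cocycle condition for a family `a = (a_{ijk})_{i<j<k}` of elements of a commutative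
monoid `M`. -/
def IsCocycle (M : Type) [CommMonoid M] {n : ℕ}
    (a : (i j k : Fin (n + 1)) → i < j → j < k → M) : Prop :=
  ∀ (i j k l : Fin (n + 1)) (hij : i < j) (hjk : j < k) (hkl : k < l),
    a i k l (hij.trans hjk) hkl * a i j k hij hjk =
      a i j l hij (hjk.trans hkl) * a j k l hjk hkl

/-- Pullback of a family of elements of `M` along a morphism of the simplex category:
`(f^* a)_{ijk} = a_{f(i) f(j) f(k)}` when `f(i) < f(j) < f(k)`, and `1` otherwise. -/
def pullFamily (M : Type) [CommMonoid M] {m n : SimplexCategory} (f : m ⟶ n)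
    (a : (i j k : Fin (n.len + 1)) → i < j → j < k → M)
    (i j k : Fin (m.len + 1)) (_ : i < j) (_ : j < k) : M :=
  if h : f.toOrderHom i < f.toOrderHom j ∧ f.toOrderHom j < f.toOrderHom k
  then a (f.toOrderHom i) (f.toOrderHom j) (f.toOrderHom k) h.1 h.2 else 1

lemma family_congr (M : Type) [CommMonoid M] {n : ℕ}
    (a : (i j k : Fin (n + 1)) → i < j → j < k → M)
    {i i' j j' k k' : Fin (n + 1)} (hi : i = i') (hj : j = j') (hk : k = k')
    {hij hjk hij' hjk'} : a i j k hij hjk = a i' j' k' hij' hjk' := by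
  subst hi; subst hj; subst hk; rfl

lemma pullFamily_isCocycle (M : Type) [CommMonoid M] {m n : SimplexCategory} (f : m ⟶ n)
    (a : (i j k : Fin (n.len + 1)) → i < j → j < k → M) (ha : IsCocycle M a) :
    IsCocycle M (pullFamily M f a) := by
  intro i j k l hij hjk hkl
  have h1 : f.toOrderHom i ≤ f.toOrderHom j := f.toOrderHom.monotone hij.le
  have h2 : f.toOrderHom j ≤ f.toOrderHom k := f.toOrderHom.monotone hjk.le
  have h3 : f.toOrderHom k ≤ f.toOrderHom l := f.toOrderHom.monotone hkl.le
  unfold pullFamily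
  split_ifs <;> first | omega | skip
  all_goals try simp only [one_mul, mul_one]
  all_goals
    first
      | rfl
      | (exact ha _ _ _ _ _ _ _)
      | (exact family_congr M a (by omega) (by omega) (by omega))

/-- The simplicial set `K(M,2)` associated to a commutative monoid `M`: its `n`-simplices are
families `(a_{ijk})_{0 ≤ i < j < k ≤ n}` of elements of `M` satisfying the cocycle condition
`a_{ikl} * a_{ijk} = a_{ijl} * a_{jkl}`. -/
def K2 (M : Type) [CommMonoid M] : SSet.{0} where
  obj n := { a : (i j k : Fin (n.unop.len + 1)) → i < j → j < k → M // IsCocycle M a }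
  map {n₁ n₂} f := TypeCat.ofHom fun a => ⟨pullFamily M f.unop a.1, pullFamily_isCocycle M f.unop a.1 a.2⟩
  map_id n := by
    ext a i j k hij hjk
    show pullFamily M (𝟙 n.unop) a.1 i j k hij hjk = a.1 i j k hij hjk
    unfold pullFamily
    rw [dif_pos ⟨hij, hjk⟩]
    exact family_congr M a.1 rfl rfl rfl
  map_comp {n₁ n₂ n₃} f g := by
    ext a i j k hij hjk
    show pullFamily M (g.unop ≫ f.unop) a.1 i j k hij hjk =
      pullFamily M g.unop (pullFamily M f.unop a.1) i j k hij hjk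
    have m1 : g.unop.toOrderHom i ≤ g.unop.toOrderHom j := g.unop.toOrderHom.monotone hij.le
    have m2 : g.unop.toOrderHom j ≤ g.unop.toOrderHom k := g.unop.toOrderHom.monotone hjk.le
    unfold pullFamily
    simp only [show ∀ x, (g.unop ≫ f.unop).toOrderHom x
        = f.unop.toOrderHom (g.unop.toOrderHom x) from fun _ => rfl]
    rcases lt_or_eq_of_le m1 with s1 | s1 <;> rcases lt_or_eq_of_le m2 with s2 | s2
    · split_ifs <;> first | rfl | omega
    · have e2 : f.unop.toOrderHom (g.unop.toOrderHom j) = f.unop.toOrderHom (g.unop.toOrderHom k) :=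
        congrArg _ s2
      split_ifs <;> first | rfl | omega
    · have e1 : f.unop.toOrderHom (g.unop.toOrderHom i) = f.unop.toOrderHom (g.unop.toOrderHom j) :=
        congrArg _ s1
      split_ifs <;> first | rfl | omega
    · have e1 : f.unop.toOrderHom (g.unop.toOrderHom i) = f.unop.toOrderHom (g.unop.toOrderHom j) :=
        congrArg _ s1
      have e2 : f.unop.toOrderHom (g.unop.toOrderHom j) = f.unop.toOrderHom (g.unop.toOrderHom k) :=
        congrArg _ s2
      split_ifs <;> first | rfl | omega

/-- The condition `{p,q} ⊄ {i,j,k}`. -/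
def NotBothMem3 {N : ℕ} (p q i j k : Fin N) : Prop :=
  ¬((p = i ∨ p = j ∨ p = k) ∧ (q = i ∨ q = j ∨ q = k))

/-- The condition `{p,q} ⊄ {i,j,k,l}`. -/
def NotBothMem4 {N : ℕ} (p q i j k l : Fin N) : Prop :=
  ¬((p = i ∨ p = j ∨ p = k ∨ p = l) ∧ (q = i ∨ q = j ∨ q = k ∨ q = l))

/-! The faces `d_p` and `d_q` of a simplex of `K(M,2)` together see exactly the triples
`{i,j,k}` not containing both `p` and `q`, and a compatible pair `(c_p, c_q)` glues to a partial
cocycle on these triples. Extending a partial cocycle to a full one amounts to choosing the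
missing values `x_{ipq}`, `y_{pjq}`, `z_{pqk}`, and the cocycle conditions involving them are those
of the quadruples containing both `p` and `q`, which are exactly the equations (1)-(6). -/

instance {N : ℕ} (p q i j k : Fin N) : Decidable (NotBothMem3 p q i j k) := by
  unfold NotBothMem3; infer_instance

lemma notBothMem3_iff {N : ℕ} {p q i j k : Fin N} :
    NotBothMem3 p q i j k ↔ ∃ t, (t = p ∨ t = q) ∧ i ≠ t ∧ j ≠ t ∧ k ≠ t := by
  simp only [NotBothMem3, exists_eq_or_imp, exists_eq_left, ne_eq, eq_comm (a := p),
    eq_comm (a := q)]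
  tauto

lemma notBothMem4_iff {N : ℕ} {p q i j k l : Fin N} :
    NotBothMem4 p q i j k l ↔ ∃ t, (t = p ∨ t = q) ∧ i ≠ t ∧ j ≠ t ∧ k ≠ t ∧ l ≠ t := by
  simp only [NotBothMem4, exists_eq_or_imp, exists_eq_left, ne_eq, eq_comm (a := p),
    eq_comm (a := q)]
  tauto

lemma pq_mem_of_not_notBothMem4 {N : ℕ} {p q i j k l : Fin N} (hij : i < j) (hjk : j < k)
    (hkl : k < l) (h4 : ¬NotBothMem4 p q i j k l) (hpq : p < q) :
    (p = i ∧ q = j) ∨ (p = i ∧ q = k) ∨ (p = i ∧ q = l) ∨ (p = j ∧ q = k) ∨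
      (p = j ∧ q = l) ∨ (p = k ∧ q = l) := by
  unfold NotBothMem4 at h4; omega

lemma Fin.succAbove_succAbove_of_lt {n : ℕ} {p q : Fin (n + 3)} (hpq : p < q) (r : Fin (n + 1)) :
    q.succAbove ((p.castPred (Fin.ne_last_of_lt hpq)).succAbove r) =
      p.succAbove ((q.pred (Fin.ne_zero_of_lt hpq)).succAbove r) := by
  ext
  simp only [Fin.succAbove, Fin.lt_def, Fin.val_castSucc, Fin.coe_castPred, Fin.val_pred] at *
  split_ifs <;> simp only [Fin.val_castSucc, Fin.val_succ] at * <;> omega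

noncomputable def Fin.succAboveInv {n : ℕ} (t i : Fin (n + 2)) (hi : i ≠ t) : Fin (n + 1) :=
  (Fin.succAboveOrderIso t).symm ⟨i, by simpa using hi⟩

lemma Fin.succAbove_succAboveInv {n : ℕ} {t i : Fin (n + 2)} (hi : i ≠ t) :
    t.succAbove (t.succAboveInv i hi) = i :=
  congrArg Subtype.val ((Fin.succAboveOrderIso t).apply_symm_apply _)

lemma Fin.succAboveInv_eq_iff {n : ℕ} {t i : Fin (n + 2)} (hi : i ≠ t) {j : Fin (n + 1)} :
    t.succAboveInv i hi = j ↔ t.succAbove j = i := by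
  refine ⟨fun h => h ▸ Fin.succAbove_succAboveInv hi, fun h => ?_⟩
  subst h
  exact (Fin.succAboveOrderIso t).symm_apply_apply j

lemma Fin.succAboveInv_lt_succAboveInv {n : ℕ} {t i j : Fin (n + 2)} (hi : i ≠ t) (hj : j ≠ t)
    (hij : i < j) : t.succAboveInv i hi < t.succAboveInv j hj := by
  rwa [← Fin.succAbove_lt_succAbove_iff (p := t), Fin.succAbove_succAboveInv,
    Fin.succAbove_succAboveInv]

section Extension

variable {M : Type} {n : ℕ} {p q : Fin (n + 1)}

abbrev PartialFamily (M : Type) (p q : Fin (n + 1)) : Type :=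
  (i j k : Fin (n + 1)) → i < j → j < k → NotBothMem3 p q i j k → M

lemma PartialFamily.congr (a : PartialFamily M p q)
    {i i' j j' k k' : Fin (n + 1)} (hi : i = i') (hj : j = j') (hk : k = k')
    {hij hjk h3 hij' hjk' h3'} : a i j k hij hjk h3 = a i' j' k' hij' hjk' h3' := by
  subst hi hj hk; rfl

def IsPartialCocycle [CommMonoid M] (a : PartialFamily M p q) : Prop :=
  ∀ (i j k l : Fin (n + 1)) (hij : i < j) (hjk : j < k) (hkl : k < l)
    (h4 : NotBothMem4 p q i j k l),
    a i k l (hij.trans hjk) hkl (by unfold NotBothMem4 at h4; unfold NotBothMem3; omega) *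
        a i j k hij hjk (by unfold NotBothMem4 at h4; unfold NotBothMem3; omega) =
      a i j l hij (hjk.trans hkl) (by unfold NotBothMem4 at h4; unfold NotBothMem3; omega) *
        a j k l hjk hkl (by unfold NotBothMem4 at h4; unfold NotBothMem3; omega)

def IsFiller [CommMonoid M] (hpq : p < q) (a : PartialFamily M p q)
    (x : (i : Fin (n + 1)) → i < p → M) (y : (j : Fin (n + 1)) → p < j → j < q → M)
    (z : (k : Fin (n + 1)) → q < k → M) : Prop :=
  (∀ (i j : Fin (n + 1)) (hij : i < j) (hjp : j < p),
    x i (hij.trans hjp) * a i j p hij hjp (by unfold NotBothMem3; omega) =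
      a i j q hij (hjp.trans hpq) (by unfold NotBothMem3; omega) * x j hjp) ∧
  (∀ (j k : Fin (n + 1)) (hpj : p < j) (hjk : j < k) (hkq : k < q),
    y k (hpj.trans hjk) hkq * a p j k hpj hjk (by unfold NotBothMem3; omega) =
      y j hpj (hjk.trans hkq) * a j k q hjk hkq (by unfold NotBothMem3; omega)) ∧
  (∀ (k l : Fin (n + 1)) (hqk : q < k) (hkl : k < l),
    a p k l (hpq.trans hqk) hkl (by unfold NotBothMem3; omega) * z k hqk =
      z l (hqk.trans hkl) * a q k l hqk hkl (by unfold NotBothMem3; omega)) ∧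
  (∀ (i j : Fin (n + 1)) (hip : i < p) (hpj : p < j) (hjq : j < q),
    x i hip * y j hpj hjq =
      a i j q (hip.trans hpj) hjq (by unfold NotBothMem3; omega) *
        a i p j hip hpj (by unfold NotBothMem3; omega)) ∧
  (∀ (i k : Fin (n + 1)) (hip : i < p) (hqk : q < k),
    a i q k (hip.trans hpq) hqk (by unfold NotBothMem3; omega) * x i hip =
      a i p k hip (hpq.trans hqk) (by unfold NotBothMem3; omega) * z k hqk) ∧
  (∀ (j k : Fin (n + 1)) (hpj : p < j) (hjq : j < q) (hqk : q < k),
    z k hqk * y j hpj hjq =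
      a p j k hpj (hjq.trans hqk) (by unfold NotBothMem3; omega) *
        a j q k hjq hqk (by unfold NotBothMem3; omega))

def PartialFamily.extend (a : PartialFamily M p q)
    (x : (i : Fin (n + 1)) → i < p → M) (y : (j : Fin (n + 1)) → p < j → j < q → M)
    (z : (k : Fin (n + 1)) → q < k → M) (i j k : Fin (n + 1)) (hij : i < j) (hjk : j < k) : M :=
  if h3 : NotBothMem3 p q i j k then a i j k hij hjk h3
  else if hip : i < p then x i hip
  else if hjq : j < q then y j (by unfold NotBothMem3 at h3; omega) hjq
  else z k (by unfold NotBothMem3 at h3; omega)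

variable (hpq : p < q) (a : PartialFamily M p q) (x : (i : Fin (n + 1)) → i < p → M)
  (y : (j : Fin (n + 1)) → p < j → j < q → M) (z : (k : Fin (n + 1)) → q < k → M)

lemma PartialFamily.extend_of_notBothMem3 (i j k : Fin (n + 1)) (hij : i < j) (hjk : j < k)
    (h3 : NotBothMem3 p q i j k) : a.extend x y z i j k hij hjk = a i j k hij hjk h3 :=
  dif_pos h3

lemma PartialFamily.extend_left {i : Fin (n + 1)} (hip : i < p) :
    a.extend x y z i p q hip hpq = x i hip := by
  rw [extend, dif_neg (by unfold NotBothMem3; omega), dif_pos hip]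

lemma PartialFamily.extend_middle {j : Fin (n + 1)} (hpj : p < j) (hjq : j < q) :
    a.extend x y z p j q hpj hjq = y j hpj hjq := by
  rw [extend, dif_neg (by unfold NotBothMem3; omega), dif_neg (lt_irrefl p), dif_pos hjq]

lemma PartialFamily.extend_right {k : Fin (n + 1)} (hqk : q < k) :
    a.extend x y z p q k hpq hqk = z k hqk := by
  rw [extend, dif_neg (by unfold NotBothMem3; omega), dif_neg (lt_irrefl p), dif_neg (lt_irrefl q)]

variable [CommMonoid M]

lemma PartialFamily.isCocycle_extend (ha : IsPartialCocycle a) (h : IsFiller hpq a x y z) :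
    IsCocycle M (a.extend x y z) := by
  obtain ⟨h1, h2, h3, h4, h5, h6⟩ := h
  intro i j k l hij hjk hkl
  by_cases hijkl : NotBothMem4 p q i j k l
  · simpa only [← a.extend_of_notBothMem3 x y z] using ha i j k l hij hjk hkl hijkl
  simp only [← a.extend_of_notBothMem3 x y z, ← a.extend_left hpq x y z,
    ← a.extend_middle x y z, ← a.extend_right hpq x y z] at h1 h2 h3 h4 h5 h6
  rcases pq_mem_of_not_notBothMem4 hij hjk hkl hijkl hpq with
    ⟨rfl, rfl⟩ | ⟨rfl, rfl⟩ | ⟨rfl, rfl⟩ | ⟨rfl, rfl⟩ | ⟨rfl, rfl⟩ | ⟨rfl, rfl⟩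
  · exact h3 k l hjk hkl
  · exact h6 j l hij hjk hkl
  · exact h2 j k hij hjk hkl
  · exact h5 i l hij hkl
  · exact (h4 i k hij hjk hkl).symm
  · exact h1 i j hij hjk

lemma PartialFamily.isFiller_of_isCocycle {b : (i j k : Fin (n + 1)) → i < j → j < k → M}
    (hb : IsCocycle M b) (hab : ∀ i j k hij hjk h3, b i j k hij hjk = a i j k hij hjk h3) :
    IsFiller hpq a (fun i hip => b i p q hip hpq) (fun j hpj hjq => b p j q hpj hjq)
      (fun k hqk => b p q k hpq hqk) := by
  refine ⟨fun i j hij hjp => ?_, fun j k hpj hjk hkq => ?_, fun k l hqk hkl => ?_,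
    fun i j hip hpj hjq => ?_, fun i k hip hqk => ?_, fun j k hpj hjq hqk => ?_⟩ <;>
    simp only [← hab]
  · exact hb i j p q hij hjp hpq
  · exact hb p j k q hpj hjk hkq
  · exact hb p q k l hpq hqk hkl
  · exact (hb i p j q hip hpj hjq).symm
  · exact hb i p q k hip hpq hqk
  · exact hb p j q k hpj hjq hqk

end Extension

section Faces

variable {M : Type} [CommMonoid M] {n : ℕ} {p q : Fin (n + 2)}

lemma K2_δ_apply (t : Fin (n + 2)) (x : (K2 M) _⦋n + 1⦌) (i j k : Fin (n + 1)) (hij : i < j)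
    (hjk : j < k) :
    ((K2 M).δ t x).1 i j k hij hjk = x.1 (t.succAbove i) (t.succAbove j) (t.succAbove k)
      (Fin.strictMono_succAbove t hij) (Fin.strictMono_succAbove t hjk) :=
  dif_pos ⟨Fin.strictMono_succAbove t hij, Fin.strictMono_succAbove t hjk⟩

lemma K2_δ_eq_iff (t : Fin (n + 2)) (x : (K2 M) _⦋n + 1⦌) (c : (K2 M) _⦋n⦌) :
    (K2 M).δ t x = c ↔ ∀ i j k hij hjk, x.1 (t.succAbove i) (t.succAbove j) (t.succAbove k)
      (Fin.strictMono_succAbove t hij) (Fin.strictMono_succAbove t hjk) = c.1 i j k hij hjk := by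
  refine ⟨?_, fun h => Subtype.ext ?_⟩
  · rintro rfl i j k hij hjk
    exact (K2_δ_apply t x i j k hij hjk).symm
  · funext i j k hij hjk
    exact (K2_δ_apply t x i j k hij hjk).trans (h i j k hij hjk)

lemma notBothMem3_succAbove {t : Fin (n + 2)} (ht : t = p ∨ t = q) (i j k : Fin (n + 1)) :
    NotBothMem3 p q (t.succAbove i) (t.succAbove j) (t.succAbove k) :=
  notBothMem3_iff.2 ⟨t, ht, t.succAbove_ne i, t.succAbove_ne j, t.succAbove_ne k⟩

lemma notBothMem4_succAbove {t : Fin (n + 2)} (ht : t = p ∨ t = q) (i j k l : Fin (n + 1)) :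
    NotBothMem4 p q (t.succAbove i) (t.succAbove j) (t.succAbove k) (t.succAbove l) :=
  notBothMem4_iff.2 ⟨t, ht, t.succAbove_ne i, t.succAbove_ne j, t.succAbove_ne k,
    t.succAbove_ne l⟩

def PartialFamily.faceFamily (a : PartialFamily M p q) (t : Fin (n + 2)) (ht : t = p ∨ t = q)
    (i j k : Fin (n + 1)) (hij : i < j) (hjk : j < k) : M :=
  a (t.succAbove i) (t.succAbove j) (t.succAbove k) (Fin.strictMono_succAbove t hij)
    (Fin.strictMono_succAbove t hjk) (notBothMem3_succAbove ht i j k)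

lemma PartialFamily.isPartialCocycle_iff (a : PartialFamily M p q) :
    IsPartialCocycle a ↔ ∀ t ht, IsCocycle M (a.faceFamily t ht) := by
  refine ⟨fun ha t ht i j k l hij hjk hkl => ha _ _ _ _ _ _ _ (notBothMem4_succAbove ht i j k l),
    fun ha i j k l hij hjk hkl h4 => ?_⟩
  obtain ⟨t, ht, hi, hj, hk, hl⟩ := notBothMem4_iff.1 h4
  obtain ⟨i, rfl⟩ := Fin.exists_succAbove_eq hi
  obtain ⟨j, rfl⟩ := Fin.exists_succAbove_eq hj
  obtain ⟨k, rfl⟩ := Fin.exists_succAbove_eq hk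
  obtain ⟨l, rfl⟩ := Fin.exists_succAbove_eq hl
  simp only [Fin.succAbove_lt_succAbove_iff] at hij hjk hkl
  exact ha t ht i j k l hij hjk hkl

def PartialFamily.face (a : PartialFamily M p q) (ha : IsPartialCocycle a) (t : Fin (n + 2))
    (ht : t = p ∨ t = q) : (K2 M) _⦋n⦌ :=
  ⟨a.faceFamily t ht, a.isPartialCocycle_iff.1 ha t ht⟩

lemma PartialFamily.δ_eq_face_iff (a : PartialFamily M p q) (ha : IsPartialCocycle a)
    (x : (K2 M) _⦋n + 1⦌) :
    ((K2 M).δ p x = a.face ha p (.inl rfl) ∧ (K2 M).δ q x = a.face ha q (.inr rfl)) ↔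
      ∀ i j k hij hjk h3, x.1 i j k hij hjk = a i j k hij hjk h3 := by
  simp only [K2_δ_eq_iff]
  refine ⟨fun hx i j k hij hjk h3 => ?_, fun hx => ⟨fun i j k _ _ => hx _ _ _ _ _ _,
    fun i j k _ _ => hx _ _ _ _ _ _⟩⟩
  obtain ⟨t, ht, hi, hj, hk⟩ := notBothMem3_iff.1 h3
  obtain ⟨i, rfl⟩ := Fin.exists_succAbove_eq hi
  obtain ⟨j, rfl⟩ := Fin.exists_succAbove_eq hj
  obtain ⟨k, rfl⟩ := Fin.exists_succAbove_eq hk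
  simp only [Fin.succAbove_lt_succAbove_iff] at hij hjk
  rcases ht with rfl | rfl
  exacts [hx.1 i j k hij hjk, hx.2 i j k hij hjk]

noncomputable def PartialFamily.ofFaces (cp cq : (K2 M) _⦋n⦌) : PartialFamily M p q :=
  fun i j k hij hjk h3 =>
    if hq : i ≠ q ∧ j ≠ q ∧ k ≠ q then
      cq.1 (q.succAboveInv i hq.1) (q.succAboveInv j hq.2.1) (q.succAboveInv k hq.2.2)
        (Fin.succAboveInv_lt_succAboveInv _ _ hij) (Fin.succAboveInv_lt_succAboveInv _ _ hjk)
    else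
      have hp : i ≠ p ∧ j ≠ p ∧ k ≠ p := by
        obtain ⟨t, rfl | rfl, ht⟩ := notBothMem3_iff.1 h3
        exacts [ht, absurd ht hq]
      cp.1 (p.succAboveInv i hp.1) (p.succAboveInv j hp.2.1) (p.succAboveInv k hp.2.2)
        (Fin.succAboveInv_lt_succAboveInv _ _ hij) (Fin.succAboveInv_lt_succAboveInv _ _ hjk)

lemma PartialFamily.faceFamily_ofFaces_right (cp cq : (K2 M) _⦋n⦌) :
    (ofFaces cp cq : PartialFamily M p q).faceFamily q (.inr rfl) = cq.1 := by
  funext i j k hij hjk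
  rw [faceFamily, ofFaces, dif_pos ⟨q.succAbove_ne i, q.succAbove_ne j, q.succAbove_ne k⟩]
  exact family_congr M cq.1 ((Fin.succAboveInv_eq_iff _).2 rfl)
    ((Fin.succAboveInv_eq_iff _).2 rfl) ((Fin.succAboveInv_eq_iff _).2 rfl)

end Faces

section Compatibility

variable {M : Type} [CommMonoid M] {n : ℕ} {p q : Fin (n + 3)} (hpq : p < q)

lemma PartialFamily.δ_face_compat (a : PartialFamily M p q) (ha : IsPartialCocycle a) :
    (K2 M).δ (p.castPred (Fin.ne_last_of_lt hpq)) (a.face ha q (.inr rfl)) =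
      (K2 M).δ (q.pred (Fin.ne_zero_of_lt hpq)) (a.face ha p (.inl rfl)) :=
  (K2_δ_eq_iff _ _ _).2 fun i j k hij hjk => by
    rw [K2_δ_apply]
    exact a.congr (Fin.succAbove_succAbove_of_lt hpq i) (Fin.succAbove_succAbove_of_lt hpq j)
      (Fin.succAbove_succAbove_of_lt hpq k)

variable {cp cq : (K2 M) _⦋n + 1⦌}

lemma PartialFamily.faceFamily_ofFaces_left
    (hc : (K2 M).δ (p.castPred (Fin.ne_last_of_lt hpq)) cq =
      (K2 M).δ (q.pred (Fin.ne_zero_of_lt hpq)) cp) :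
    (ofFaces cp cq : PartialFamily M p q).faceFamily p (.inl rfl) = cp.1 := by
  funext i j k hij hjk
  rw [faceFamily, ofFaces]
  split_ifs with hq
  · have hq' : ∀ r, p.succAbove r ≠ q → r ≠ q.pred (Fin.ne_zero_of_lt hpq) :=
      fun r hr h => hr (h ▸ Fin.succAbove_pred_of_lt p q hpq)
    obtain ⟨i, rfl⟩ := Fin.exists_succAbove_eq (hq' i hq.1)
    obtain ⟨j, rfl⟩ := Fin.exists_succAbove_eq (hq' j hq.2.1)
    obtain ⟨k, rfl⟩ := Fin.exists_succAbove_eq (hq' k hq.2.2)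
    simp only [Fin.succAbove_lt_succAbove_iff] at hij hjk
    have hc' := (K2_δ_eq_iff _ _ _).1 hc i j k hij hjk
    rw [K2_δ_apply] at hc'
    refine Eq.trans (family_congr M cq.1 ?_ ?_ ?_) hc' <;>
      exact (Fin.succAboveInv_eq_iff _).2 (Fin.succAbove_succAbove_of_lt hpq _)
  · exact family_congr M cp.1 ((Fin.succAboveInv_eq_iff _).2 rfl)
      ((Fin.succAboveInv_eq_iff _).2 rfl) ((Fin.succAboveInv_eq_iff _).2 rfl)

lemma PartialFamily.isPartialCocycle_ofFaces
    (hc : (K2 M).δ (p.castPred (Fin.ne_last_of_lt hpq)) cq =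
      (K2 M).δ (q.pred (Fin.ne_zero_of_lt hpq)) cp) :
    IsPartialCocycle (ofFaces cp cq : PartialFamily M p q) := by
  refine (isPartialCocycle_iff _).2 fun t ht => ?_
  rcases ht with rfl | rfl
  · rw [faceFamily_ofFaces_left hpq hc]; exact cp.2
  · rw [faceFamily_ofFaces_right]; exact cq.2

end Compatibility

/-- For a commutative monoid `M`, `n > 1` and `0 ≤ p < q ≤ n`, the simplicial set `K(M,2)`
satisfies the Beck-Chevalley condition `BC_{p,q}[n]` iff for every family `a_{ijk}` of elements
of `M`, indexed by `0 ≤ i < j < k ≤ n` with `{p,q} ⊄ {i,j,k}` and satisfying the cocycle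
equations for all `0 ≤ i < j < k < l ≤ n` with `{p,q} ⊄ {i,j,k,l}`, there exist elements
`x_{ipq}` (`i < p`), `y_{pjq}` (`p < j < q`), `z_{pqk}` (`q < k`) of `M` satisfying the
equations (1)-(6). -/
theorem k2_bcCondition_iff (M : Type) [CommMonoid M] (m : ℕ) (p q : Fin (m + 3))
    (hpq : p < q) :
    BCCondition (K2 M) m p q hpq ↔
      ∀ a : (i j k : Fin (m + 3)) → i < j → j < k → NotBothMem3 p q i j k → M,
        (∀ (i j k l : Fin (m + 3)) (hij : i < j) (hjk : j < k) (hkl : k < l)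
          (h4 : NotBothMem4 p q i j k l),
          a i k l (hij.trans hjk) hkl
              (by unfold NotBothMem4 at h4; unfold NotBothMem3; omega) *
            a i j k hij hjk (by unfold NotBothMem4 at h4; unfold NotBothMem3; omega) =
          a i j l hij (hjk.trans hkl)
              (by unfold NotBothMem4 at h4; unfold NotBothMem3; omega) *
            a j k l hjk hkl (by unfold NotBothMem4 at h4; unfold NotBothMem3; omega)) →
        ∃ (x : (i : Fin (m + 3)) → i < p → M)
          (y : (j : Fin (m + 3)) → p < j → j < q → M)
          (z : (k : Fin (m + 3)) → q < k → M),
          (∀ (i j : Fin (m + 3)) (hij : i < j) (hjp : j < p),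
            x i (hij.trans hjp) * a i j p hij hjp (by unfold NotBothMem3; omega) =
              a i j q hij (hjp.trans hpq) (by unfold NotBothMem3; omega) * x j hjp) ∧
          (∀ (j k : Fin (m + 3)) (hpj : p < j) (hjk : j < k) (hkq : k < q),
            y k (hpj.trans hjk) hkq * a p j k hpj hjk (by unfold NotBothMem3; omega) =
              y j hpj (hjk.trans hkq) * a j k q hjk hkq (by unfold NotBothMem3; omega)) ∧
          (∀ (k l : Fin (m + 3)) (hqk : q < k) (hkl : k < l),
            a p k l (hpq.trans hqk) hkl (by unfold NotBothMem3; omega) * z k hqk =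
              z l (hqk.trans hkl) * a q k l hqk hkl (by unfold NotBothMem3; omega)) ∧
          (∀ (i j : Fin (m + 3)) (hip : i < p) (hpj : p < j) (hjq : j < q),
            x i hip * y j hpj hjq =
              a i j q (hip.trans hpj) hjq (by unfold NotBothMem3; omega) *
                a i p j hip hpj (by unfold NotBothMem3; omega)) ∧
          (∀ (i k : Fin (m + 3)) (hip : i < p) (hqk : q < k),
            a i q k (hip.trans hpq) hqk (by unfold NotBothMem3; omega) * x i hip =
              a i p k hip (hpq.trans hqk) (by unfold NotBothMem3; omega) * z k hqk) ∧
          (∀ (j k : Fin (m + 3)) (hpj : p < j) (hjq : j < q) (hqk : q < k),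
            z k hqk * y j hpj hjq =
              a p j k hpj (hjq.trans hqk) (by unfold NotBothMem3; omega) *
                a j q k hjq hqk (by unfold NotBothMem3; omega)) := by
  constructor
  · intro hBC a ha
    obtain ⟨x, hxp, hxq⟩ := hBC _ _ (PartialFamily.δ_face_compat hpq a ha)
    refine ⟨fun i hip => x.1 i p q hip hpq, fun j hpj hjq => x.1 p j q hpj hjq,
      fun k hqk => x.1 p q k hpq hqk, ?_⟩
    exact PartialFamily.isFiller_of_isCocycle hpq a x.2
      ((PartialFamily.δ_eq_face_iff a ha x).1 ⟨hxp, hxq⟩)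
  · intro hfill cp cq hc
    have ha := PartialFamily.isPartialCocycle_ofFaces hpq hc
    obtain ⟨x, y, z, hxyz⟩ := hfill _ ha
    obtain ⟨hp, hq⟩ := (PartialFamily.δ_eq_face_iff _ ha
      ⟨_, PartialFamily.isCocycle_extend hpq _ x y z ha hxyz⟩).2
      ((PartialFamily.ofFaces cp cq).extend_of_notBothMem3 x y z)
    exact ⟨_, hp.trans (Subtype.ext (PartialFamily.faceFamily_ofFaces_left hpq hc)),
      hq.trans (Subtype.ext (PartialFamily.faceFamily_ofFaces_right cp cq))⟩
end

section
/- Fix n>1 and 0 ≤ p < q ≤ n. Let a_{ijk} ∈ ℕ (nonnegative integers) be given for all 0 ≤ i < j < k ≤ n with {p,q} ⊄ {i,j,k}, and suppose integers x_{ipq} (0 ≤ i < p), y_{pjq} (p < j < q), z_{pqk} (q < k ≤ n) in ℤ satisfy: (1) x_{ipq} + a_{ijp} = a_{ijq} + x_{jpq} for all 0 ≤ i < j < p; (2) y_{pkq} + a_{pjk} = y_{pjq} + a_{jkq} for all p < j < k < q; (3) a_{pkl} + z_{pqk} = z_{pql} + a_{qkl} for all q < k < l ≤ n; (4) x_{ipq}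 + y_{pjq} = a_{ijq} + a_{ipj} for all 0 ≤ i < p < j < q; (5) a_{iqk} + x_{ipq} = a_{ipk} + z_{pqk} for all 0 ≤ i < p < q < k ≤ n; (6) z_{pqk} + y_{pjq} = a_{pjk} + a_{jqk} for all p < j < q < k ≤ n. Then there exists A ∈ ℤ such that all of x_{ipq} + A, y_{pjq} − A, z_{pqk} + A are nonnegative, and these shifted values again satisfy equations (1)–(6). In particular, equations (1)–(6) then admit solutions in ℕ. -/
/-!
Equations (4) and (6) say that `x i + y j` and `z k + y j` are nonnegative, i.e. every `-x i` and
every `-z k` lies below every `y j`. Any `A` separating these finitely many values makes the shifted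
unknowns nonnegative, and the shift `x + A`, `y - A`, `z + A` preserves every equation since in each
one the shifts cancel. Nonnegative integer solutions then descend to `ℕ`.
-/

open Set

theorem exists_between_of_forall_le_of_finite {α : Type*} [LinearOrder α] [Nonempty α]
    {s t : Set α} (hs : s.Finite) (ht : t.Finite) (hst : ∀ a ∈ s, ∀ b ∈ t, a ≤ b) :
    (upperBounds s ∩ lowerBounds t).Nonempty := by
  rcases s.eq_empty_or_nonempty with rfl | hne
  · obtain ⟨c, hc⟩ := ht.bddBelow
    exact ⟨c, by simp, hc⟩
  · obtain ⟨c, hc, hmax⟩ := s.exists_max_image id hs hne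
    exact ⟨c, hmax, hst c hc⟩

/-- The system of equations (1)–(6) for the unknowns `x i` (`i < p`), `y j` (`p < j < q`) and
`z k` (`q < k ≤ n`). -/
def SolvesSystem {M : Type*} [Add M] (n p q : ℕ) (a : ℕ → ℕ → ℕ → M) (x y z : ℕ → M) : Prop :=
  (∀ i j, i < j → j < p → x i + a i j p = a i j q + x j) ∧
  (∀ j k, p < j → j < k → k < q → y k + a p j k = y j + a j k q) ∧
  (∀ k l, q < k → k < l → l ≤ n → a p k l + z k = z l + a q k l) ∧
  (∀ i j, i < p → p < j → j < q → x i + y j = a i j q + a i p j) ∧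
  (∀ i k, i < p → q < k → k ≤ n → a i q k + x i = a i p k + z k) ∧
  (∀ j k, p < j → j < q → q < k → k ≤ n → z k + y j = a p j k + a j q k)

namespace SolvesSystem

variable {n p q : ℕ}

theorem shift {G : Type*} [AddCommGroup G] {a : ℕ → ℕ → ℕ → G} {x y z : ℕ → G}
    (h : SolvesSystem n p q a x y z) (A : G) :
    SolvesSystem n p q a (fun i => x i + A) (fun j => y j - A) (fun k => z k + A) := by
  obtain ⟨h1, h2, h3, h4, h5, h6⟩ := h
  refine ⟨fun i j hij hjp => ?_, fun j k hpj hjk hkq => ?_, fun k l hqk hkl hln => ?_,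
    fun i j hip hpj hjq => ?_, fun i k hip hqk hkn => ?_, fun j k hpj hjq hqk hkn => ?_⟩
  · rw [add_right_comm, h1 i j hij hjp, add_assoc]
  · rw [sub_add_eq_add_sub, sub_add_eq_add_sub, h2 j k hpj hjk hkq]
  · rw [← add_assoc, h3 k l hqk hkl hln, add_right_comm]
  · rw [add_add_sub_cancel, h4 i j hip hpj hjq]
  · rw [← add_assoc, ← add_assoc, h5 i k hip hqk hkn]
  · rw [add_add_sub_cancel, h6 j k hpj hjq hqk hkn]

theorem exists_shift_nonneg {G : Type*} [AddCommGroup G] [LinearOrder G] [IsOrderedAddMonoid G]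
    {a : ℕ → ℕ → ℕ → G} {x y z : ℕ → G} (h : SolvesSystem n p q a x y z)
    (ha : ∀ i j k, 0 ≤ a i j k) :
    ∃ A : G, (∀ i, i < p → 0 ≤ x i + A) ∧ (∀ j, p < j → j < q → 0 ≤ y j - A) ∧
      (∀ k, q < k → k ≤ n → 0 ≤ z k + A) := by
  obtain ⟨-, -, -, h4, -, h6⟩ := h
  have hsep : ∀ c ∈ (fun i => -x i) '' Iio p ∪ (fun k => -z k) '' Ioc q n,
      ∀ b ∈ y '' Ioo p q, c ≤ b := by
    rintro _ (⟨i, hip, rfl⟩ | ⟨k, ⟨hqk, hkn⟩, rfl⟩) _ ⟨j, ⟨hpj, hjq⟩, rfl⟩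
    · exact neg_le_iff_add_nonneg'.2 (h4 i j hip hpj hjq ▸ add_nonneg (ha ..) (ha ..))
    · exact neg_le_iff_add_nonneg'.2 (h6 j k hpj hjq hqk hkn ▸ add_nonneg (ha ..) (ha ..))
  obtain ⟨A, hlow, hup⟩ := exists_between_of_forall_le_of_finite
    (((finite_Iio p).image _).union ((finite_Ioc q n).image _)) ((finite_Ioo p q).image y) hsep
  refine ⟨A, fun i hip => ?_, fun j hpj hjq => ?_, fun k hqk hkn => ?_⟩
  · exact neg_le_iff_add_nonneg'.1 (hlow (Or.inl ⟨i, hip, rfl⟩))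
  · exact sub_nonneg.2 (hup ⟨j, ⟨hpj, hjq⟩, rfl⟩)
  · exact neg_le_iff_add_nonneg'.1 (hlow (Or.inr ⟨k, ⟨hqk, hkn⟩, rfl⟩))

theorem toNat {a : ℕ → ℕ → ℕ → ℕ} {x y z : ℕ → ℤ}
    (h : SolvesSystem n p q (fun i j k => (a i j k : ℤ)) x y z)
    (hx : ∀ i, i < p → 0 ≤ x i) (hy : ∀ j, p < j → j < q → 0 ≤ y j)
    (hz : ∀ k, q < k → k ≤ n → 0 ≤ z k) :
    SolvesSystem n p q a (fun i => (x i).toNat) (fun j => (y j).toNat) (fun k => (z k).toNat) := by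
  simp only [SolvesSystem] at h ⊢
  obtain ⟨h1, h2, h3, h4, h5, h6⟩ := h
  refine ⟨fun i j hij hjp => ?_, fun j k hpj hjk hkq => ?_, fun k l hqk hkl hln => ?_,
    fun i j hip hpj hjq => ?_, fun i k hip hqk hkn => ?_, fun j k hpj hjq hqk hkn => ?_⟩
  · have := h1 i j hij hjp; have := hx i (hij.trans hjp); have := hx j hjp; omega
  · have := h2 j k hpj hjk hkq; have := hy j hpj (hjk.trans hkq)
    have := hy k (hpj.trans hjk) hkq; omega
  · have := h3 k l hqk hkl hln; have := hz k hqk (hkl.le.trans hln)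
    have := hz l (hqk.trans hkl) hln; omega
  · have := h4 i j hip hpj hjq; have := hx i hip; have := hy j hpj hjq; omega
  · have := h5 i k hip hqk hkn; have := hx i hip; have := hz k hqk hkn; omega
  · have := h6 j k hpj hjq hqk hkn; have := hy j hpj hjq; have := hz k hqk hkn; omega

end SolvesSystem

theorem exists_shift_nonneg_solution_general (n p q : ℕ)
    (a : ℕ → ℕ → ℕ → ℕ) (x y z : ℕ → ℤ)
    (h1 : ∀ i j, i < j → j < p → x i + (a i j p : ℤ) = (a i j q : ℤ) + x j)
    (h2 : ∀ j k, p < j → j < k → k < q → y k + (a p j k : ℤ) = y j + (a j k q : ℤ))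
    (h3 : ∀ k l, q < k → k < l → l ≤ n → (a p k l : ℤ) + z k = z l + (a q k l : ℤ))
    (h4 : ∀ i j, i < p → p < j → j < q → x i + y j = (a i j q : ℤ) + (a i p j : ℤ))
    (h5 : ∀ i k, i < p → q < k → k ≤ n → (a i q k : ℤ) + x i = (a i p k : ℤ) + z k)
    (h6 : ∀ j k, p < j → j < q → q < k → k ≤ n →
      z k + y j = (a p j k : ℤ) + (a j q k : ℤ)) :
    (∃ A : ℤ,
      (∀ i, i < p → 0 ≤ x i + A) ∧
      (∀ j, p < j → j < q → 0 ≤ y j - A) ∧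
      (∀ k, q < k → k ≤ n → 0 ≤ z k + A) ∧
      (∀ i j, i < j → j < p → (x i + A) + (a i j p : ℤ) = (a i j q : ℤ) + (x j + A)) ∧
      (∀ j k, p < j → j < k → k < q → (y k - A) + (a p j k : ℤ) = (y j - A) + (a j k q : ℤ)) ∧
      (∀ k l, q < k → k < l → l ≤ n → (a p k l : ℤ) + (z k + A) = (z l + A) + (a q k l : ℤ)) ∧
      (∀ i j, i < p → p < j → j < q → (x i + A) + (y j - A) = (a i j q : ℤ) + (a i p j : ℤ)) ∧
      (∀ i k, i < p → q < k → k ≤ n →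
        (a i q k : ℤ) + (x i + A) = (a i p k : ℤ) + (z k + A)) ∧
      (∀ j k, p < j → j < q → q < k → k ≤ n →
        (z k + A) + (y j - A) = (a p j k : ℤ) + (a j q k : ℤ))) ∧
    (∃ x' y' z' : ℕ → ℕ,
      (∀ i j, i < j → j < p → x' i + a i j p = a i j q + x' j) ∧
      (∀ j k, p < j → j < k → k < q → y' k + a p j k = y' j + a j k q) ∧
      (∀ k l, q < k → k < l → l ≤ n → a p k l + z' k = z' l + a q k l) ∧
      (∀ i j, i < p → p < j → j < q → x' i + y' j = a i j q + a i p j) ∧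
      (∀ i k, i < p → q < k → k ≤ n → a i q k + x' i = a i p k + z' k) ∧
      (∀ j k, p < j → j < q → q < k → k ≤ n → z' k + y' j = a p j k + a j q k)) := by
  have hsol : SolvesSystem n p q (fun i j k => (a i j k : ℤ)) x y z := ⟨h1, h2, h3, h4, h5, h6⟩
  obtain ⟨A, hx, hy, hz⟩ := hsol.exists_shift_nonneg fun i j k => Int.natCast_nonneg (a i j k)
  have hshift := hsol.shift A
  exact ⟨⟨A, hx, hy, hz, hshift⟩, _, _, _, hshift.toNat hx hy hz⟩

/-- Fix `n > 1` and `0 ≤ p < q ≤ n`. Given nonnegative integers `a_{ijk}` and integers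
`x_i` (`i < p`), `y_j` (`p < j < q`), `z_k` (`q < k ≤ n`) satisfying equations (1)-(6), there
is an `A : ℤ` such that `x_i + A`, `y_j - A`, `z_k + A` are all nonnegative and again satisfy
equations (1)-(6). In particular, equations (1)-(6) admit solutions in `ℕ`. -/
theorem exists_shift_nonneg_solution (n p q : ℕ) (hn : 1 < n) (hpq : p < q) (hqn : q ≤ n)
    (a : ℕ → ℕ → ℕ → ℕ) (x y z : ℕ → ℤ)
    (h1 : ∀ i j, i < j → j < p → x i + (a i j p : ℤ) = (a i j q : ℤ) + x j)
    (h2 : ∀ j k, p < j → j < k → k < q → y k + (a p j k : ℤ) = y j + (a j k q : ℤ))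
    (h3 : ∀ k l, q < k → k < l → l ≤ n → (a p k l : ℤ) + z k = z l + (a q k l : ℤ))
    (h4 : ∀ i j, i < p → p < j → j < q → x i + y j = (a i j q : ℤ) + (a i p j : ℤ))
    (h5 : ∀ i k, i < p → q < k → k ≤ n → (a i q k : ℤ) + x i = (a i p k : ℤ) + z k)
    (h6 : ∀ j k, p < j → j < q → q < k → k ≤ n →
      z k + y j = (a p j k : ℤ) + (a j q k : ℤ)) :
    (∃ A : ℤ,
      (∀ i, i < p → 0 ≤ x i + A) ∧
      (∀ j, p < j → j < q → 0 ≤ y j - A) ∧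
      (∀ k, q < k → k ≤ n → 0 ≤ z k + A) ∧
      (∀ i j, i < j → j < p → (x i + A) + (a i j p : ℤ) = (a i j q : ℤ) + (x j + A)) ∧
      (∀ j k, p < j → j < k → k < q → (y k - A) + (a p j k : ℤ) = (y j - A) + (a j k q : ℤ)) ∧
      (∀ k l, q < k → k < l → l ≤ n → (a p k l : ℤ) + (z k + A) = (z l + A) + (a q k l : ℤ)) ∧
      (∀ i j, i < p → p < j → j < q → (x i + A) + (y j - A) = (a i j q : ℤ) + (a i p j : ℤ)) ∧
      (∀ i k, i < p → q < k → k ≤ n →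
        (a i q k : ℤ) + (x i + A) = (a i p k : ℤ) + (z k + A)) ∧
      (∀ j k, p < j → j < q → q < k → k ≤ n →
        (z k + A) + (y j - A) = (a p j k : ℤ) + (a j q k : ℤ))) ∧
    (∃ x' y' z' : ℕ → ℕ,
      (∀ i j, i < j → j < p → x' i + a i j p = a i j q + x' j) ∧
      (∀ j k, p < j → j < k → k < q → y' k + a p j k = y' j + a j k q) ∧
      (∀ k l, q < k → k < l → l ≤ n → a p k l + z' k = z' l + a q k l) ∧
      (∀ i j, i < p → p < j → j < q → x' i + y' j = a i j q + a i p j) ∧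
      (∀ i k, i < p → q < k → k ≤ n → a i q k + x' i = a i p k + z' k) ∧
      (∀ j k, p < j → j < q → q < k → k ≤ n → z' k + y' j = a p j k + a j q k)) :=
  exists_shift_nonneg_solution_general n p q a x y z h1 h2 h3 h4 h5 h6
end
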